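/- For every solution of the chemostat system with nonnegative initial data, liminf_{t→∞} S(t) ≥ θ, where θ ∈ (0, S⁰) is the unique root of f(θ)S⁰ − D(S⁰ − θ) = 0. In particular the nutrient concentration is ultimately bounded below by a positive constant independent of initial conditions. -/

import Mathlib

set_option maxHeartbeats 1000000

open Filter Set Topology

lemma ev_right_gt {g : ℝ → ℝ} {d x : ℝ} (h : HasDerivAt g d x) (hd : 0 < d) :
    ∀ᶠ z in nhdsWithin x (Set.Ioi x), g x < g z := by
  have hs := hasDerivAt_iff_tendsto_slope.1 h
  have h1 : ∀ᶠ z in nhdsWithin x {x}ᶜ, 0 < slope g x z :=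
    hs.eventually (eventually_gt_nhds hd)
  have h2 : ∀ᶠ z in nhdsWithin x (Set.Ioi x), 0 < slope g x z :=
    h1.filter_mono (nhdsWithin_mono x (fun z hz => Set.mem_compl_singleton_iff.2 (ne_of_gt hz)))
  have h3 : ∀ᶠ z in nhdsWithin x (Set.Ioi x), x < z := eventually_mem_nhdsWithin
  filter_upwards [h2, h3] with z hz1 hz2
  rw [slope_def_field] at hz1
  have hzx : 0 < z - x := by linarith
  rcases div_pos_iff.1 hz1 with ⟨h, _⟩ | ⟨_, h⟩
  · linarith
  · linarith

lemma branch_bound {w : ℝ → ℝ} {d x M ε : ℝ} (hw : HasDerivAt w d x) (hε : 0 < ε)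
    (h : M < w x ∨ (w x = M ∧ 0 ≤ d)) :
    ∀ᶠ z in nhdsWithin x (Set.Ioi x), M - ε * (z - x) ≤ w z := by
  have h3 : ∀ᶠ z in nhdsWithin x (Set.Ioi x), x < z := eventually_mem_nhdsWithin
  rcases h with h | ⟨hM, hd⟩
  · have h1 : ∀ᶠ z in 𝓝 x, M < w z := hw.continuousAt.eventually (eventually_gt_nhds h)
    filter_upwards [h1.filter_mono nhdsWithin_le_nhds, h3] with z hz1 hz2
    nlinarith
  · have hs := hasDerivAt_iff_tendsto_slope.1 hw
    have h1 : ∀ᶠ z in nhdsWithin x {x}ᶜ, d - ε < slope w x z :=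
      hs.eventually (eventually_gt_nhds (by linarith))
    have h2 : ∀ᶠ z in nhdsWithin x (Set.Ioi x), d - ε < slope w x z :=
      h1.filter_mono (nhdsWithin_mono x (fun z hz => Set.mem_compl_singleton_iff.2 (ne_of_gt hz)))
    filter_upwards [h2, h3] with z hz1 hz2
    rw [slope_def_field] at hz1
    have hzx : 0 < z - x := by linarith
    have := (lt_div_iff₀ hzx).1 hz1
    nlinarith [mul_nonneg hd hzx.le]

/-- A continuous function that starts nonnegative and, at every point where it is
negative, has "liminf right slope ≥ 0", stays nonnegative. -/
lemma nonneg_on_Icc {g : ℝ → ℝ} {a b : ℝ}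
    (hg : ContinuousOn g (Set.Icc a b)) (ha : 0 ≤ g a)
    (H : ∀ x ∈ Set.Ico a b, g x < 0 → ∀ ε > (0:ℝ),
      ∀ᶠ z in nhdsWithin x (Set.Ioi x), g x - ε * (z - x) ≤ g z) :
    ∀ y ∈ Set.Icc a b, 0 ≤ g y := by
  intro y hy
  by_contra hneg
  push_neg at hneg
  have hay : a ≤ y := hy.1
  have hyb : y ≤ b := hy.2
  have hIccsub : Set.Icc a y ⊆ Set.Icc a b := Set.Icc_subset_Icc le_rfl hyb
  -- the last point ≤ y where g is nonnegative
  set K : Set ℝ := Set.Icc a y ∩ g ⁻¹' Set.Ici 0 with hK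
  have hKne : K.Nonempty := ⟨a, ⟨le_rfl, hay⟩, ha⟩
  have hKclosed : IsClosed K :=
    (hg.mono hIccsub).preimage_isClosed_of_isClosed isClosed_Icc isClosed_Ici
  have hKcomp : IsCompact K := isCompact_Icc.of_isClosed_subset hKclosed Set.inter_subset_left
  set c := sSup K with hc
  have hcK : c ∈ K := hKcomp.sSup_mem hKne
  have hac : a ≤ c := hcK.1.1
  have hcy : c ≤ y := hcK.1.2
  have hgc : 0 ≤ g c := hcK.2
  have hcylt : c < y := lt_of_le_of_ne hcy (fun h => absurd hgc (not_le.2 (by rw [h]; exact hneg)))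
  have hnegon : ∀ x, c < x → x ≤ y → g x < 0 := by
    intro x h1 h2
    by_contra h
    push_neg at h
    exact absurd (le_csSup hKcomp.bddAbove ⟨⟨hac.trans h1.le, h2⟩, h⟩) (not_le.2 h1)
  have key : ∀ ε > (0:ℝ), ∀ η > (0:ℝ), -η - ε * (y - a) ≤ g y := by
    intro ε hε η hη
    -- pick a starting point x0 just to the right of c
    have hccont : ContinuousWithinAt g (Set.Icc a b) c := hg c ⟨hac, hcy.trans hyb⟩
    have hev : ∀ᶠ z in nhdsWithin c (Set.Icc a b), g c - η < g z :=
      hccont.eventually (eventually_gt_nhds (by linarith))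
    have hsub : Set.Ioc c y ⊆ Set.Icc a b := fun z hz => ⟨hac.trans hz.1.le, hz.2.trans hyb⟩
    have hev2 : ∀ᶠ z in nhdsWithin c (Set.Ioc c y), g c - η < g z :=
      hev.filter_mono (nhdsWithin_mono c hsub)
    haveI : (nhdsWithin c (Set.Ioc c y)).NeBot := by
      rw [nhdsWithin_Ioc_eq_nhdsGT hcylt]; infer_instance
    obtain ⟨x0, hgx0, hx0⟩ := (hev2.and eventually_mem_nhdsWithin).exists
    -- sup of points where g + ε·id is above its value at x0
    have hφc : ContinuousOn (fun x => g x + ε * x) (Set.Icc a b) :=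
      hg.add ((continuous_const.mul continuous_id).continuousOn)
    set K2 : Set ℝ := Set.Icc x0 y ∩ (fun x => g x + ε * x) ⁻¹' Set.Ici (g x0 + ε * x0) with hK2
    have hx0y : x0 ≤ y := hx0.2
    have hsub2 : Set.Icc x0 y ⊆ Set.Icc a b := fun z hz =>
      ⟨hac.trans (hx0.1.le.trans hz.1), hz.2.trans hyb⟩
    have hK2ne : K2.Nonempty := ⟨x0, ⟨le_rfl, hx0y⟩, Set.mem_preimage.2 (Set.mem_Ici.2 le_rfl)⟩
    have hK2closed : IsClosed K2 :=
      (hφc.mono hsub2).preimage_isClosed_of_isClosed isClosed_Icc isClosed_Ici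
    have hK2comp : IsCompact K2 := isCompact_Icc.of_isClosed_subset hK2closed Set.inter_subset_left
    set s := sSup K2 with hs
    have hsK2 : s ∈ K2 := hK2comp.sSup_mem hK2ne
    have hx0s : x0 ≤ s := hsK2.1.1
    have hsy : s ≤ y := hsK2.1.2
    have hφs : g x0 + ε * x0 ≤ g s + ε * s := hsK2.2
    have hseqy : s = y := by
      by_contra hne
      have hsylt : s < y := lt_of_le_of_ne hsy hne
      have hgs : g s < 0 := hnegon s (lt_of_lt_of_le hx0.1 hx0s) hsy
      have hsIco : s ∈ Set.Ico a b := ⟨hac.trans (hx0.1.le.trans hx0s), lt_of_lt_of_le hsylt hyb⟩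
      have hHs := H s hsIco hgs ε hε
      have hIoc : ∀ᶠ z in nhdsWithin s (Set.Ioi s), z ∈ Set.Ioc s y :=
        eventually_of_mem (Ioc_mem_nhdsGT hsylt) (fun z hz => hz)
      obtain ⟨z, hz1, hz2⟩ := (hHs.and hIoc).exists
      have hzK2 : z ∈ K2 := by
        refine ⟨⟨hx0s.trans hz2.1.le, hz2.2⟩, Set.mem_preimage.2 (Set.mem_Ici.2 ?_)⟩
        have : g s + ε * s ≤ g z + ε * z := by nlinarith [hz1]
        exact le_trans hφs this
      exact absurd (le_csSup hK2comp.bddAbove hzK2) (not_le.2 hz2.1)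
    -- conclude
    have hx0a : a ≤ x0 := hac.trans hx0.1.le
    rw [hseqy] at hφs
    nlinarith [hgx0, hgc]
  -- contradiction
  rcases eq_or_lt_of_le hay with rfl | hlt
  · exact absurd ha (not_le.2 hneg)
  · have hya : y - a ≠ 0 := ne_of_gt (by linarith)
    have h1 := key (-g y / (4 * (y - a)))
      (div_pos (by linarith) (by linarith)) (-g y / 4) (by linarith)
    have h2 : -g y / (4 * (y - a)) * (y - a) = -g y / 4 := by
      field_simp
    rw [h2] at h1
    linarith

lemma neg_of_mul_neg {E a : ℝ} (hE : 0 < E) (h : E * a < 0) : a < 0 := by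
  by_contra hc
  push_neg at hc
  exact absurd (mul_nonneg hE.le hc) (not_le.2 h)

lemma good1_arith {fS kdx klx kgx D C p q : ℝ} (hfx0 : 0 ≤ fS) (hfxC : fS ≤ C)
    (hkd : 0 ≤ kdx) (hkl : 0 ≤ klx) (hkg : 0 ≤ kgx) (hD : 0 < D)
    (hp : p ≤ 0) (hq : 0 ≤ q) :
    C * p ≤ ((1 - kdx - klx) * fS - D) * p + kgx * q := by
  have hc : (1 - kdx - klx) * fS - D - C ≤ 0 := by
    nlinarith [mul_nonneg (add_nonneg hkd hkl) hfx0]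
  nlinarith [mul_nonneg (neg_nonneg.2 hc) (neg_nonneg.2 hp), mul_nonneg hkg hq]

lemma good2_arith {fS kdx klx kgx D C p q : ℝ} (hfx0 : 0 ≤ fS) (hC0 : 0 ≤ C)
    (hkd : 0 ≤ kdx) (hkl : 0 ≤ klx) (hkg : 0 ≤ kgx) (hD : 0 < D)
    (hp : 0 ≤ p) (hq : q ≤ 0) :
    C * q ≤ klx * fS * p - (kgx + D) * q := by
  nlinarith [mul_nonneg (mul_nonneg hkl hfx0) hp,
    mul_nonneg (add_nonneg (add_nonneg hkg hD.le) hC0) (neg_nonneg.2 hq)]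

lemma good3_arith {fS kdx klx kgx D C p q : ℝ} (hfx0 : 0 ≤ fS) (hfxC : fS ≤ C) (hC0 : 0 ≤ C)
    (hkd : 0 ≤ kdx) (hkl : 0 ≤ klx) (hkg : 0 ≤ kgx) (hD : 0 < D)
    (hp : p ≤ 0) (hq : q ≤ 0) :
    C * (p + q) ≤ (((1 - kdx - klx) * fS - D) * p + kgx * q) + (klx * fS * p - (kgx + D) * q) := by
  nlinarith [mul_le_mul_of_nonneg_right hfxC (neg_nonneg.2 hp),
    mul_nonneg hkd (mul_nonneg hfx0 (neg_nonneg.2 hp)),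
    mul_nonneg (add_nonneg hD.le hC0) (neg_nonneg.2 hq),
    mul_nonneg hD.le (neg_nonneg.2 hp)]

lemma octant (f kd kl kg Bs Bp S : ℝ → ℝ) (D S0 Y : ℝ)
    (hfc : Continuous f) (hfmono : Monotone f) (hf0 : f 0 = 0)
    (hkd : ∀ t, 0 ≤ kd t) (hkl : ∀ t, 0 ≤ kl t) (hkg : ∀ t, 0 ≤ kg t)
    (hD : 0 < D) (hS0 : 0 < S0) (hY : 0 < Y)
    (hBs : ∀ t, HasDerivAt Bs (((1 - kd t - kl t) * f (S t) - D) * Bs t + kg t * Bp t) t)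
    (hBp : ∀ t, HasDerivAt Bp (kl t * f (S t) * Bs t - (kg t + D) * Bp t) t)
    (hS : ∀ t, HasDerivAt S (D * (S0 - S t) - f (S t) * Bs t / Y) t)
    (h0 : 0 ≤ Bs 0 ∧ 0 ≤ Bp 0 ∧ 0 ≤ S 0) :
    ∀ t, 0 ≤ t → 0 ≤ Bs t ∧ 0 ≤ Bp t ∧ 0 ≤ S t := by
  have dBs : Differentiable ℝ Bs := fun t => (hBs t).differentiableAt
  have dBp : Differentiable ℝ Bp := fun t => (hBp t).differentiableAt
  have dS : Differentiable ℝ S := fun t => (hS t).differentiableAt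
  have cBs : Continuous Bs := dBs.continuous
  have cBp : Continuous Bp := dBp.continuous
  have cS : Continuous S := dS.continuous
  intro t0 ht0
  by_contra hbad
  have ht0E : Bs t0 < 0 ∨ Bp t0 < 0 ∨ S t0 < 0 := by
    by_contra h; push_neg at h; exact hbad ⟨h.1, h.2.1, h.2.2⟩
  set E : Set ℝ := {t | t ∈ Set.Icc 0 t0 ∧ (Bs t < 0 ∨ Bp t < 0 ∨ S t < 0)} with hE
  have hEne : E.Nonempty := ⟨t0, ⟨ht0, le_rfl⟩, ht0E⟩
  have hEbdd : BddBelow E := ⟨0, fun x hx => hx.1.1⟩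
  obtain ⟨τ, hτle, hτglb⟩ : ∃ τ, (∀ x ∈ E, τ ≤ x) ∧ (∀ b, (∀ x ∈ E, b ≤ x) → b ≤ τ) :=
    ⟨sInf E, fun x hx => csInf_le hEbdd hx, fun b hb => le_csInf hEne hb⟩
  have hτ0 : 0 ≤ τ := hτglb 0 (fun x hx => hx.1.1)
  have hτt0 : τ ≤ t0 := hτle t0 ⟨⟨ht0, le_rfl⟩, ht0E⟩
  -- values at τ are still nonnegative
  have hat : ∀ g : ℝ → ℝ, Continuous g → 0 ≤ g 0 →
      (∀ s, g s < 0 → (Bs s < 0 ∨ Bp s < 0 ∨ S s < 0)) → 0 ≤ g τ := by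
    intro g hgc hg0 himp
    by_contra hx
    push_neg at hx
    obtain ⟨δ, hδ, hball⟩ :=
      Metric.eventually_nhds_iff.1 ((hgc.tendsto τ).eventually (eventually_lt_nhds hx))
    rcases eq_or_lt_of_le hτ0 with h | h
    · rw [← h] at hx; exact absurd hg0 (not_le.2 hx)
    · have hs1 : max (τ - δ / 2) (τ / 2) < τ := max_lt (by linarith) (by linarith)
      have hs0 : 0 < max (τ - δ / 2) (τ / 2) :=
        lt_of_lt_of_le (by linarith) (le_max_right _ _)
      have hsd : dist (max (τ - δ / 2) (τ / 2)) τ < δ := by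
        rw [Real.dist_eq, abs_lt]
        constructor
        · nlinarith [le_max_left (τ - δ / 2) (τ / 2)]
        · nlinarith [le_max_left (τ - δ / 2) (τ / 2)]
      have hgs := hball hsd
      have hsE : max (τ - δ / 2) (τ / 2) ∈ E :=
        ⟨⟨hs0.le, hs1.le.trans hτt0⟩, himp _ hgs⟩
      exact absurd (hτle _ hsE) (not_le.2 hs1)
  have hBsτ : 0 ≤ Bs τ := hat Bs cBs h0.1 (fun s h => Or.inl h)
  have hBpτ : 0 ≤ Bp τ := hat Bp cBp h0.2.1 (fun s h => Or.inr (Or.inl h))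
  have hSτ : 0 ≤ S τ := hat S cS h0.2.2 (fun s h => Or.inr (Or.inr h))
  have hτlt : τ < t0 := by
    rcases eq_or_lt_of_le hτt0 with h | h
    · exfalso; rw [h] at hBsτ hBpτ hSτ
      rcases ht0E with h' | h' | h' <;> linarith
    · exact h
  -- Step A : S stays nonnegative slightly beyond τ
  have hSA : ∃ δ > (0:ℝ), ∀ s ∈ Set.Icc τ (τ + δ), 0 ≤ S s := by
    rcases eq_or_lt_of_le hSτ with h | h
    · have hder : HasDerivAt S (D * S0) τ := by
        have h2 := hS τ
        rw [← h, hf0] at h2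
        simpa using h2
      have hev := ev_right_gt hder (by positivity)
      obtain ⟨u, hu, hsub⟩ := mem_nhdsGT_iff_exists_Ioc_subset.1 hev
      refine ⟨u - τ, sub_pos.2 hu, fun s hs => ?_⟩
      rcases eq_or_lt_of_le hs.1 with h' | h'
      · rw [← h', ← h]
      · have hmem : s ∈ Set.Ioc τ u := ⟨h', by have := hs.2; linarith⟩
        have := hsub hmem
        rw [← h] at this
        exact this.le
    · obtain ⟨δ, hδ, hball⟩ :=
        Metric.eventually_nhds_iff.1 ((cS.tendsto τ).eventually (eventually_gt_nhds h))
      refine ⟨δ / 2, by linarith, fun s hs => ?_⟩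
      refine le_of_lt (hball ?_)
      rw [Real.dist_eq, abs_lt]
      obtain ⟨hs1, hs2⟩ := hs
      constructor <;> linarith
  obtain ⟨δ1, hδ1, hSnn⟩ := hSA
  obtain ⟨T', hT'1, hT'2, hτltT'⟩ : ∃ T', T' ≤ τ + δ1 ∧ T' ≤ t0 ∧ τ < T' :=
    ⟨min (τ + δ1) t0, min_le_left _ _, min_le_right _ _, lt_min (by linarith) hτlt⟩
  have hτT' : τ ≤ T' := hτltT'.le
  have hSnn' : ∀ s ∈ Set.Icc τ T', 0 ≤ S s := fun s hs =>
    hSnn s ⟨hs.1, hs.2.trans hT'1⟩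
  have hfS0 : ∀ s ∈ Set.Icc τ T', 0 ≤ f (S s) := fun s hs => hf0 ▸ hfmono (hSnn' s hs)
  obtain ⟨C, hC0, hCb⟩ : ∃ C, 0 ≤ C ∧ ∀ s ∈ Set.Icc τ T', f (S s) ≤ C := by
    obtain ⟨xm, hxm, hmax⟩ := isCompact_Icc.exists_isMaxOn (Set.nonempty_Icc.2 hτT')
      ((hfc.comp cS).continuousOn : ContinuousOn (fun s => f (S s)) (Set.Icc τ T'))
    exact ⟨f (S xm), hfS0 xm hxm, hmax⟩
  have cexp : Continuous fun s : ℝ => Real.exp (-(C * s)) :=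
    Real.continuous_exp.comp (continuous_const.mul continuous_id).neg
  have hexpder : ∀ x : ℝ, HasDerivAt (fun s => Real.exp (-(C * s))) (-C * Real.exp (-(C * x))) x := by
    intro x
    have h1 : HasDerivAt (fun s : ℝ => -(C * s)) (-C) x := by
      exact (((hasDerivAt_id x).const_mul C).neg).congr_deriv (by simp)
    simpa [mul_comm] using h1.exp
  have hmain : ∀ y ∈ Set.Icc τ T',
      0 ≤ min (Real.exp (-(C * y)) * Bs y)
        (min (Real.exp (-(C * y)) * Bp y) (Real.exp (-(C * y)) * (Bs y + Bp y))) := by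
    apply nonneg_on_Icc
    · exact ((cexp.mul cBs).min ((cexp.mul cBp).min (cexp.mul (cBs.add cBp)))).continuousOn
    · have h1 : (0:ℝ) ≤ Real.exp (-(C * τ)) := (Real.exp_pos _).le
      exact le_min (mul_nonneg h1 hBsτ) (le_min (mul_nonneg h1 hBpτ) (mul_nonneg h1 (by linarith)))
    · intro x hx hmx ε hε
      have hxI : x ∈ Set.Icc τ T' := ⟨hx.1, hx.2.le⟩
      have hfx0 : 0 ≤ f (S x) := hfS0 x hxI
      have hfxC : f (S x) ≤ C := hCb x hxI
      have hexppos : 0 < Real.exp (-(C * x)) := Real.exp_pos _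
      have d1 : HasDerivAt (fun y => Real.exp (-(C * y)) * Bs y)
          (-C * Real.exp (-(C * x)) * Bs x +
            Real.exp (-(C * x)) * (((1 - kd x - kl x) * f (S x) - D) * Bs x + kg x * Bp x)) x :=
        (hexpder x).mul (hBs x)
      have d2 : HasDerivAt (fun y => Real.exp (-(C * y)) * Bp y)
          (-C * Real.exp (-(C * x)) * Bp x +
            Real.exp (-(C * x)) * (kl x * f (S x) * Bs x - (kg x + D) * Bp x)) x :=
        (hexpder x).mul (hBp x)
      have d3 : HasDerivAt (fun y => Real.exp (-(C * y)) * (Bs y + Bp y))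
          (-C * Real.exp (-(C * x)) * (Bs x + Bp x) +
            Real.exp (-(C * x)) * ((((1 - kd x - kl x) * f (S x) - D) * Bs x + kg x * Bp x) +
              (kl x * f (S x) * Bs x - (kg x + D) * Bp x))) x :=
        (hexpder x).mul ((hBs x).add (hBp x))
      set M := min (Real.exp (-(C * x)) * Bs x)
        (min (Real.exp (-(C * x)) * Bp x) (Real.exp (-(C * x)) * (Bs x + Bp x))) with hM
      have hmle1 : M ≤ Real.exp (-(C * x)) * Bs x := min_le_left _ _
      have hmle2 : M ≤ Real.exp (-(C * x)) * Bp x :=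
        le_trans (min_le_right _ _) (min_le_left _ _)
      have hmle3 : M ≤ Real.exp (-(C * x)) * (Bs x + Bp x) :=
        le_trans (min_le_right _ _) (min_le_right _ _)
      have hgood1 : M < Real.exp (-(C * x)) * Bs x ∨
          (Real.exp (-(C * x)) * Bs x = M ∧ 0 ≤ -C * Real.exp (-(C * x)) * Bs x +
            Real.exp (-(C * x)) * (((1 - kd x - kl x) * f (S x) - D) * Bs x + kg x * Bp x)) := by
        rcases lt_or_eq_of_le hmle1 with h | h
        · exact Or.inl h
        · refine Or.inr ⟨h.symm, ?_⟩
          have hp : Bs x < 0 := neg_of_mul_neg hexppos (h ▸ hmx)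
          have hq : 0 ≤ Bp x := by
            have h2 : Real.exp (-(C * x)) * Bs x ≤ Real.exp (-(C * x)) * (Bs x + Bp x) := by
              rw [← h]; exact hmle3
            have := (mul_le_mul_iff_right₀ hexppos).1 h2
            linarith
          have harith := good1_arith hfx0 hfxC (hkd x) (hkl x) (hkg x) hD hp.le hq
          have hrew : -C * Real.exp (-(C * x)) * Bs x +
              Real.exp (-(C * x)) * (((1 - kd x - kl x) * f (S x) - D) * Bs x + kg x * Bp x) =
              Real.exp (-(C * x)) * ((((1 - kd x - kl x) * f (S x) - D) * Bs x + kg x * Bp x) -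
                C * Bs x) := by ring
          rw [hrew]
          exact mul_nonneg hexppos.le (by linarith)
      have hgood2 : M < Real.exp (-(C * x)) * Bp x ∨
          (Real.exp (-(C * x)) * Bp x = M ∧ 0 ≤ -C * Real.exp (-(C * x)) * Bp x +
            Real.exp (-(C * x)) * (kl x * f (S x) * Bs x - (kg x + D) * Bp x)) := by
        rcases lt_or_eq_of_le hmle2 with h | h
        · exact Or.inl h
        · refine Or.inr ⟨h.symm, ?_⟩
          have hq : Bp x < 0 := neg_of_mul_neg hexppos (h ▸ hmx)
          have hp : 0 ≤ Bs x := by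
            have h2 : Real.exp (-(C * x)) * Bp x ≤ Real.exp (-(C * x)) * (Bs x + Bp x) := by
              rw [← h]; exact hmle3
            have := (mul_le_mul_iff_right₀ hexppos).1 h2
            linarith
          have harith := good2_arith hfx0 hC0 (hkd x) (hkl x) (hkg x) hD hp hq.le
          have hrew : -C * Real.exp (-(C * x)) * Bp x +
              Real.exp (-(C * x)) * (kl x * f (S x) * Bs x - (kg x + D) * Bp x) =
              Real.exp (-(C * x)) * ((kl x * f (S x) * Bs x - (kg x + D) * Bp x) -
                C * Bp x) := by ring
          rw [hrew]
          exact mul_nonneg hexppos.le (by linarith)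
      have hgood3 : M < Real.exp (-(C * x)) * (Bs x + Bp x) ∨
          (Real.exp (-(C * x)) * (Bs x + Bp x) = M ∧ 0 ≤
            -C * Real.exp (-(C * x)) * (Bs x + Bp x) +
            Real.exp (-(C * x)) * ((((1 - kd x - kl x) * f (S x) - D) * Bs x + kg x * Bp x) +
              (kl x * f (S x) * Bs x - (kg x + D) * Bp x))) := by
        rcases lt_or_eq_of_le hmle3 with h | h
        · exact Or.inl h
        · refine Or.inr ⟨h.symm, ?_⟩
          have hpq : Bs x + Bp x < 0 := neg_of_mul_neg hexppos (h ▸ hmx)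
          have hple : Bs x ≤ 0 := by
            have h2 : Real.exp (-(C * x)) * (Bs x + Bp x) ≤ Real.exp (-(C * x)) * Bp x := by
              rw [← h]; exact hmle2
            have := (mul_le_mul_iff_right₀ hexppos).1 h2
            linarith
          have hqle : Bp x ≤ 0 := by
            have h2 : Real.exp (-(C * x)) * (Bs x + Bp x) ≤ Real.exp (-(C * x)) * Bs x := by
              rw [← h]; exact hmle1
            have := (mul_le_mul_iff_right₀ hexppos).1 h2
            linarith
          have harith := good3_arith hfx0 hfxC hC0 (hkd x) (hkl x) (hkg x) hD hple hqle
          have hrew : -C * Real.exp (-(C * x)) * (Bs x + Bp x) +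
              Real.exp (-(C * x)) * ((((1 - kd x - kl x) * f (S x) - D) * Bs x + kg x * Bp x) +
                (kl x * f (S x) * Bs x - (kg x + D) * Bp x)) =
              Real.exp (-(C * x)) * (((((1 - kd x - kl x) * f (S x) - D) * Bs x + kg x * Bp x) +
                (kl x * f (S x) * Bs x - (kg x + D) * Bp x)) - C * (Bs x + Bp x)) := by ring
          rw [hrew]
          exact mul_nonneg hexppos.le (by linarith)
      have E1 := branch_bound d1 hε hgood1
      have E2 := branch_bound d2 hε hgood2
      have E3 := branch_bound d3 hε hgood3
      filter_upwards [E1, E2, E3] with z h1 h2 h3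
      exact le_min h1 (le_min h2 h3)
  have hBsnn' : ∀ s ∈ Set.Icc τ T', 0 ≤ Bs s := by
    intro s hs
    have h2 : Real.exp (-(C * s)) * 0 ≤ Real.exp (-(C * s)) * Bs s := by
      simpa using le_trans (hmain s hs) (min_le_left _ _)
    exact (mul_le_mul_iff_right₀ (Real.exp_pos _)).1 h2
  have hBpnn' : ∀ s ∈ Set.Icc τ T', 0 ≤ Bp s := by
    intro s hs
    have h2 : Real.exp (-(C * s)) * 0 ≤ Real.exp (-(C * s)) * Bp s := by
      simpa using le_trans (hmain s hs) (le_trans (min_le_right _ _) (min_le_left _ _))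
    exact (mul_le_mul_iff_right₀ (Real.exp_pos _)).1 h2
  have hT'le : ∀ x ∈ E, T' < x := by
    intro x hxE
    rcases lt_or_ge T' x with h | h
    · exact h
    · exfalso
      have hxI : x ∈ Set.Icc τ T' := ⟨hτle x hxE, h⟩
      rcases hxE.2 with h' | h' | h'
      · exact absurd (hBsnn' x hxI) (not_le.2 h')
      · exact absurd (hBpnn' x hxI) (not_le.2 h')
      · exact absurd (hSnn' x hxI) (not_le.2 h')
  have h1 : T' ≤ τ := hτglb T' (fun x hx => (hT'le x hx).le)
  linarith

lemma mono_slope {g g' : ℝ → ℝ} {a b K : ℝ}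
    (hd : ∀ t ∈ Set.Icc a b, HasDerivAt g (g' t) t)
    (hK : ∀ t ∈ Set.Icc a b, K ≤ g' t) (hab : a ≤ b) :
    g a + K * (b - a) ≤ g b := by
  have hmono : MonotoneOn (fun t => g t - K * t) (Set.Icc a b) := by
    apply monotoneOn_of_deriv_nonneg (convex_Icc a b)
    · exact ContinuousOn.sub (fun t ht => (hd t ht).continuousAt.continuousWithinAt)
        ((continuous_const.mul continuous_id).continuousOn)
    · intro t ht
      rw [interior_Icc] at ht
      exact ((hd t (Set.Ioo_subset_Icc_self ht)).sub
        ((hasDerivAt_id t).const_mul K)).differentiableAt.differentiableWithinAt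
    · intro t ht
      rw [interior_Icc] at ht
      have h1 : HasDerivAt (fun t => g t - K * t) (g' t - K * 1) t :=
        (hd t (Set.Ioo_subset_Icc_self ht)).sub ((hasDerivAt_id t).const_mul K)
      rw [h1.deriv]
      have := hK t (Set.Ioo_subset_Icc_self ht)
      linarith
  have := hmono (Set.left_mem_Icc.2 hab) (Set.right_mem_Icc.2 hab) hab
  simp only at this
  linarith

lemma anti_slope {g g' : ℝ → ℝ} {a b : ℝ}
    (hd : ∀ t ∈ Set.Icc a b, HasDerivAt g (g' t) t)
    (h0 : ∀ t ∈ Set.Icc a b, g' t ≤ 0) (hab : a ≤ b) :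
    g b ≤ g a := by
  have := mono_slope (g := fun t => -g t) (g' := fun t => -g' t) (K := 0)
    (fun t ht => (hd t ht).neg) (fun t ht => by simpa using h0 t ht) hab
  simp at this
  linarith


/-- liminf S(t) ≥ θ, where θ ∈ (0,S⁰) is the unique root of f(θ)S⁰ − D(S⁰−θ) = 0;
a lower bound independent of (nonnegative) initial conditions. -/
theorem nutrient_lower_bound
    (f kd kl kg Bs Bp S : ℝ → ℝ) (D S0 Y θ : ℝ)
    (hf : ContDiff ℝ (⊤ : ℕ∞) f) (hfmono : Monotone f) (hf0 : f 0 = 0)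
    (hkd : ∀ t, 0 ≤ kd t) (hkl : ∀ t, 0 ≤ kl t) (hkg : ∀ t, 0 ≤ kg t)
    (hD : 0 < D) (hS0 : 0 < S0) (hY : Y ∈ Set.Ioo (0:ℝ) 1)
    (hBs : ∀ t, HasDerivAt Bs (((1 - kd t - kl t) * f (S t) - D) * Bs t + kg t * Bp t) t)
    (hBp : ∀ t, HasDerivAt Bp (kl t * f (S t) * Bs t - (kg t + D) * Bp t) t)
    (hS : ∀ t, HasDerivAt S (D * (S0 - S t) - f (S t) * Bs t / Y) t)
    (h0 : 0 ≤ Bs 0 ∧ 0 ≤ Bp 0 ∧ 0 ≤ S 0)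
    (hθ : θ ∈ Set.Ioo 0 S0) (hroot : f θ * S0 - D * (S0 - θ) = 0) :
    θ ≤ liminf S atTop := by

  obtain ⟨hY0, hY1⟩ := hY
  obtain ⟨hθ0, hθS0⟩ := hθ
  have hYne : Y ≠ 0 := ne_of_gt hY0
  have hoct := octant f kd kl kg Bs Bp S D S0 Y hf.continuous hfmono hf0 hkd hkl hkg
    hD hS0 hY0 hBs hBp hS h0
  have dS : Differentiable ℝ S := fun t => (hS t).differentiableAt
  have cS : Continuous S := dS.continuous
  -- the exponentially weighted dissipativity function
  have hexpD : ∀ t : ℝ, HasDerivAt (fun s => Real.exp (D * s)) (D * Real.exp (D * t)) t := by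
    intro t
    have h1 : HasDerivAt (fun s : ℝ => D * s) D t := by
      simpa using (hasDerivAt_id t).const_mul D
    simpa [mul_comm] using h1.exp
  have hGder : ∀ t, HasDerivAt (fun s => (Bs s + Bp s + Y * S s - Y * S0) * Real.exp (D * s))
      (-(kd t * f (S t) * Bs t) * Real.exp (D * t)) t := by
    intro t
    have h1 : HasDerivAt (fun s => Bs s + Bp s + Y * S s - Y * S0)
        ((((1 - kd t - kl t) * f (S t) - D) * Bs t + kg t * Bp t) +
          (kl t * f (S t) * Bs t - (kg t + D) * Bp t) +
          Y * (D * (S0 - S t) - f (S t) * Bs t / Y)) t :=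
      (((hBs t).add (hBp t)).add ((hS t).const_mul Y)).sub_const (Y * S0)
    have h3 := h1.mul (hexpD t)
    have hYc : Y * (f (S t) * Bs t / Y) = f (S t) * Bs t := by field_simp
    exact h3.congr_deriv (by linear_combination (-Real.exp (D * t)) * hYc)
  have hGanti : ∀ t, 0 ≤ t →
      (Bs t + Bp t + Y * S t - Y * S0) * Real.exp (D * t) ≤ Bs 0 + Bp 0 + Y * S 0 - Y * S0 := by
    intro t ht
    have := anti_slope (g := fun s => (Bs s + Bp s + Y * S s - Y * S0) * Real.exp (D * s))
      (g' := fun s => -(kd s * f (S s) * Bs s) * Real.exp (D * s))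
      (a := 0) (b := t) (fun s _ => hGder s) ?_ ht
    · simpa using this
    · intro s hs
      have hfs : 0 ≤ f (S s) := hf0 ▸ hfmono (hoct s hs.1).2.2
      have h1 : 0 ≤ kd s * f (S s) * Bs s :=
        mul_nonneg (mul_nonneg (hkd s) hfs) (hoct s hs.1).1
      have h2 := (Real.exp_pos (D * s)).le
      nlinarith
  set G0 := Bs 0 + Bp 0 + Y * S 0 - Y * S0 with hG0
  have hWb : ∀ t, 0 ≤ t →
      Bs t + Bp t + Y * S t - Y * S0 ≤ G0 * Real.exp (-(D * t)) := by
    intro t ht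
    have h1 := hGanti t ht
    have h3 : Bs t + Bp t + Y * S t - Y * S0 =
        ((Bs t + Bp t + Y * S t - Y * S0) * Real.exp (D * t)) * Real.exp (-(D * t)) := by
      rw [mul_assoc, ← Real.exp_add]
      norm_num
    rw [h3]
    exact mul_le_mul_of_nonneg_right h1 (Real.exp_pos _).le
  have hGtend : Tendsto (fun t => G0 * Real.exp (-(D * t))) atTop (nhds 0) := by
    have h2 : Tendsto (fun t : ℝ => D * t) atTop atTop :=
      Tendsto.const_mul_atTop hD tendsto_id
    have h3 : Tendsto (fun t : ℝ => Real.exp (-(D * t))) atTop (nhds 0) :=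
      Real.tendsto_exp_neg_atTop_nhds_zero.comp h2
    simpa using h3.const_mul G0
  have hBsev : ∀ ε, 0 < ε → ∀ᶠ t in atTop, Bs t ≤ Y * S0 + ε := by
    intro ε hε
    filter_upwards [hGtend.eventually (eventually_lt_nhds hε), eventually_ge_atTop (0:ℝ)]
      with t h5 h6
    have h7 := hWb t h6
    have h8 : 0 ≤ Bp t := (hoct t h6).2.1
    have h9 : 0 ≤ S t := (hoct t h6).2.2
    nlinarith [mul_nonneg hY0.le h9]
  have hScob : ∀ᶠ t in atTop, S t ≤ S0 + 1 := by
    filter_upwards [hGtend.eventually (eventually_lt_nhds hY0), eventually_ge_atTop (0:ℝ)]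
      with t h5 h6
    have h7 := hWb t h6
    have h8 : 0 ≤ Bp t := (hoct t h6).2.1
    have h9 : 0 ≤ Bs t := (hoct t h6).1
    nlinarith
  -- the comparison argument
  have key : ∀ δ, 0 < δ → δ < θ → ∀ᶠ t in atTop, θ - δ ≤ S t := by
    intro δ hδ0 hδθ
    have hfθ0 : 0 ≤ f θ := hf0 ▸ hfmono hθ0.le
    have hεpos : 0 < Y * (D * δ) / (2 * (f θ + 1)) :=
      div_pos (by positivity) (by linarith)
    obtain ⟨T, hT⟩ := eventually_atTop.1
      ((hBsev _ hεpos).and (eventually_ge_atTop (0:ℝ)))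
    have KD : ∀ t, T ≤ t → S t ≤ θ - δ →
        D * δ / 2 ≤ D * (S0 - S t) - f (S t) * Bs t / Y := by
      intro t ht hSle
      obtain ⟨hBsle, ht0⟩ := hT t ht
      have h1 : f (S t) ≤ f θ := hfmono (by linarith)
      have h2 : 0 ≤ f (S t) := hf0 ▸ hfmono (hoct t ht0).2.2
      have h3 : 0 ≤ Bs t := (hoct t ht0).1
      have hprod : f (S t) * Bs t ≤ f θ * (Y * S0 + Y * (D * δ) / (2 * (f θ + 1))) :=
        mul_le_mul h1 hBsle h3 hfθ0
      have hεb : f θ * (Y * (D * δ) / (2 * (f θ + 1))) ≤ D * δ / 2 * Y := by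
        rw [← mul_div_assoc, div_le_iff₀ (by linarith : (0:ℝ) < 2 * (f θ + 1))]
        nlinarith [mul_pos (mul_pos hD hδ0) hY0]
      have hdiv : f (S t) * Bs t / Y ≤ f θ * S0 + D * δ / 2 := by
        rw [div_le_iff₀ hY0]
        nlinarith
      have hDS : D * (θ - δ) + D * (S0 - θ + δ) = D * S0 := by ring
      nlinarith [mul_le_mul_of_nonneg_left hSle hD.le, hroot]
    have hex : ∃ t1, T ≤ t1 ∧ θ - δ < S t1 := by
      by_contra hno
      push_neg at hno
      have hDδ : 0 < D * δ := mul_pos hD hδ0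
      obtain ⟨x, hTx, heq⟩ : ∃ x, T ≤ x ∧ D * δ / 2 * (x - T) = max (θ - δ - S T) 0 + 1 := by
        refine ⟨T + (max (θ - δ - S T) 0 + 1) * (2 / (D * δ)), ?_, ?_⟩
        · have hpos : 0 < 2 / (D * δ) := by positivity
          nlinarith [le_max_right (θ - δ - S T) 0]
        · field_simp
          ring
      have hmono := mono_slope (g := S)
        (g' := fun t => D * (S0 - S t) - f (S t) * Bs t / Y)
        (a := T) (b := x) (K := D * δ / 2)
        (fun t _ => hS t) (fun t ht => KD t ht.1 (hno t ht.1)) hTx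
      rw [heq] at hmono
      nlinarith [hno _ hTx, le_max_left (θ - δ - S T) 0]
    obtain ⟨t1, ht1T, ht1⟩ := hex
    have hfinal : ∀ t, t1 ≤ t → θ - δ ≤ S t := by
      intro t2 ht2
      by_contra hc
      push_neg at hc
      have ht1t2 : t1 < t2 :=
        lt_of_le_of_ne ht2 (fun h => by rw [h] at ht1; linarith)
      set K3 := Set.Icc t1 t2 ∩ S ⁻¹' Set.Ici (θ - δ) with hK3
      have hK3ne : K3.Nonempty := ⟨t1, ⟨le_rfl, ht1t2.le⟩, le_of_lt ht1⟩
      have hK3cl : IsClosed K3 := isClosed_Icc.inter (isClosed_Ici.preimage cS)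
      have hK3cp : IsCompact K3 := isCompact_Icc.of_isClosed_subset hK3cl inter_subset_left
      obtain ⟨c, hcmem, hcub, hcisub⟩ : ∃ c, c ∈ K3 ∧ (∀ x ∈ K3, x ≤ c) ∧ c ≤ t2 :=
        ⟨sSup K3, hK3cp.sSup_mem hK3ne, fun x hx => le_csSup hK3cp.bddAbove hx,
          (hK3cp.sSup_mem hK3ne).1.2⟩
      have hc1 : t1 ≤ c := hcmem.1.1
      have hSc : θ - δ ≤ S c := hcmem.2
      have hct2 : c < t2 :=
        lt_of_le_of_ne hcisub (fun h => by rw [h] at hSc; linarith)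
      have hlt : ∀ s, c < s → s ≤ t2 → S s < θ - δ := by
        intro s h1 h2
        by_contra h
        push_neg at h
        exact absurd (hcub s ⟨⟨hc1.trans h1.le, h2⟩, h⟩) (not_le.2 h1)
      have hSc_le : S c ≤ θ - δ := by
        haveI hne : (nhdsWithin c (Set.Ioc c t2)).NeBot := by
          rw [nhdsWithin_Ioc_eq_nhdsGT hct2]; infer_instance
        have htend : Tendsto S (nhdsWithin c (Set.Ioc c t2)) (nhds (S c)) :=
          (cS.tendsto c).mono_left nhdsWithin_le_nhds
        refine le_of_tendsto htend ?_
        filter_upwards [eventually_mem_nhdsWithin] with s hs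
        exact (hlt s hs.1 hs.2).le
      have hbound : ∀ t ∈ Set.Icc c t2, D * δ / 2 ≤ D * (S0 - S t) - f (S t) * Bs t / Y := by
        intro t ht
        have hTt : T ≤ t := le_trans (ht1T.trans hc1) ht.1
        rcases eq_or_lt_of_le ht.1 with h | h
        · exact KD t hTt (by rw [← h]; exact hSc_le)
        · exact KD t hTt (hlt t h ht.2).le
      have hmono := mono_slope (g := S)
        (g' := fun t => D * (S0 - S t) - f (S t) * Bs t / Y)
        (a := c) (b := t2) (K := D * δ / 2) (fun t _ => hS t) hbound hct2.le
      nlinarith [mul_pos (show (0:ℝ) < D * δ / 2 by positivity) (sub_pos.2 hct2)]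
    exact eventually_atTop.2 ⟨t1, hfinal⟩
  -- conclude about the liminf
  have hlim : ∀ δ, 0 < δ → δ < θ → θ - δ ≤ liminf S atTop := by
    intro δ h1 h2
    apply le_liminf_of_le
    · exact isCoboundedUnder_ge_of_eventually_le atTop hScob
    · exact key δ h1 h2
  by_contra hfin
  push_neg at hfin
  have hd1 : min ((θ - liminf S atTop) / 2) (θ / 2) ≤ (θ - liminf S atTop) / 2 :=
    min_le_left _ _
  have hd2 : min ((θ - liminf S atTop) / 2) (θ / 2) ≤ θ / 2 := min_le_right _ _
  have hd0 : 0 < min ((θ - liminf S atTop) / 2) (θ / 2) :=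
    lt_min (by linarith) (by linarith)
  have := hlim _ hd0 (by linarith)
  linarith
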